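/- arXiv:2405.08404 — 2 statements merged into one kernel-verified Lean document; each statement's English description precedes it below -/
import Mathlib

section
/- For each integer k with 1 ≤ k ≤ N−1, the matrix I − (1−p_k)B̄_k^{(0)} is invertible and p_k · B̄_k^+ · (I − (1−p_k)B̄_k^{(0)})^{−1} equals the 2×2 matrix B̃_k^+ with rows (1 − (N(s+2) − k(s+1) + 1)/((k+1)(2N+1)(s+2)), (N(s+2) − k(s+1) + 1)/((k+1)(2N+1)(s+2))) and ((s+1)/((2N+1)(s+2)), 1 − (s+1)/((2N+1)(s+2))). -/
noncomputable section

/-- `p_k = (2+s)k(N−k)/(N(k + (1+s)(N−k)))`. -/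
def pZ (N : ℕ) (s : ℝ) (k : ℕ) : ℝ :=
  (2 + s) * k * ((N : ℝ) - k) / ((N : ℝ) * ((k : ℝ) + (1 + s) * ((N : ℝ) - k)))

/-- `B̄_k^+`. -/
def Bp (N k : ℕ) : Matrix (Fin 2) (Fin 2) ℝ :=
  !![1 - ((N : ℝ) - k) / (2 * N * (k + 1)), ((N : ℝ) - k) / (2 * N * (k + 1)); 0, 1]

/-- `B̄_k^{(0)}`. -/
def B0 (N : ℕ) (s : ℝ) (k : ℕ) : Matrix (Fin 2) (Fin 2) ℝ :=
  ((k : ℝ) ^ 2 / ((k : ℝ) ^ 2 + (1 + s) * ((N : ℝ) - k) ^ 2)) •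
    !![1 - ((N : ℝ) - k) / (2 * k * N), ((N : ℝ) - k) / (2 * k * N); 0, 1] +
  ((1 + s) * ((N : ℝ) - k) ^ 2 / ((k : ℝ) ^ 2 + (1 + s) * ((N : ℝ) - k) ^ 2)) •
    !![1, 0; (k : ℝ) / (2 * N * ((N : ℝ) - k)), 1 - (k : ℝ) / (2 * N * ((N : ℝ) - k))]

/-- `B̃_k^+`. -/
def Btp (N : ℕ) (s : ℝ) (k : ℕ) : Matrix (Fin 2) (Fin 2) ℝ :=
  !![1 - ((N : ℝ) * (s + 2) - k * (s + 1) + 1) / (((k : ℝ) + 1) * (2 * N + 1) * (s + 2)),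
       ((N : ℝ) * (s + 2) - k * (s + 1) + 1) / (((k : ℝ) + 1) * (2 * N + 1) * (s + 2));
     (s + 1) / ((2 * (N : ℝ) + 1) * (s + 2)), 1 - (s + 1) / ((2 * (N : ℝ) + 1) * (s + 2))]

set_option maxHeartbeats 1000000 in
/-- For each integer `1 ≤ k ≤ N−1`, the matrix `I − (1−p_k)B̄_k^{(0)}`
is invertible and `p_k · B̄_k^+ · (I − (1−p_k)B̄_k^{(0)})⁻¹ = B̃_k^+`. -/
theorem stmt7 (N : ℕ) (hN : 2 ≤ N) (s : ℝ) (hs : 0 < s)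
    (k : ℕ) (hk1 : 1 ≤ k) (hkN : k ≤ N - 1) :
    IsUnit (1 - (1 - pZ N s k) • B0 N s k) ∧
    pZ N s k • (Bp N k * (1 - (1 - pZ N s k) • B0 N s k)⁻¹) = Btp N s k := by
  have hkN' : k + 1 ≤ N := by omega
  have hκn : (k : ℝ) + 1 ≤ (N : ℝ) := by exact_mod_cast hkN'
  have hκ : (1 : ℝ) ≤ (k : ℝ) := by exact_mod_cast hk1
  have hn : (0 : ℝ) < N := by positivity
  have hκ0 : (0 : ℝ) < k := by linarith
  have hnk : (0 : ℝ) < (N : ℝ) - k := by linarith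
  have hs2 : (0 : ℝ) < s + 2 := by linarith
  have hq : (0 : ℝ) < (k : ℝ) + (1 + s) * ((N : ℝ) - k) := by positivity
  have hn0 : (N : ℝ) ≠ 0 := ne_of_gt hn
  have hκne : (k : ℝ) ≠ 0 := ne_of_gt hκ0
  have hnk0 : (N : ℝ) - k ≠ 0 := ne_of_gt hnk
  have hD0 : (k : ℝ) ^ 2 + (1 + s) * ((N : ℝ) - k) ^ 2 ≠ 0 := by positivity
  have hq0 : (k : ℝ) + (1 + s) * ((N : ℝ) - k) ≠ 0 := ne_of_gt hq
  have hk10 : (k : ℝ) + 1 ≠ 0 := by positivity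
  have h2N1 : 2 * (N : ℝ) + 1 ≠ 0 := by positivity
  have hs20 : s + 2 ≠ 0 := ne_of_gt hs2
  set M : Matrix (Fin 2) (Fin 2) ℝ := 1 - (1 - pZ N s k) • B0 N s k with hMdef
  have hQ : (1 - pZ N s k) • B0 N s k =
      !![((k : ℝ) ^ 2 + (1 + s) * ((N : ℝ) - k) ^ 2 - (k : ℝ) * ((N : ℝ) - k) / (2 * N)) /
           ((N : ℝ) * ((k : ℝ) + (1 + s) * ((N : ℝ) - k))),
         ((k : ℝ) * ((N : ℝ) - k) / (2 * N)) / ((N : ℝ) * ((k : ℝ) + (1 + s) * ((N : ℝ) - k)));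
         ((1 + s) * (k : ℝ) * ((N : ℝ) - k) / (2 * N)) /
           ((N : ℝ) * ((k : ℝ) + (1 + s) * ((N : ℝ) - k))),
         ((k : ℝ) ^ 2 + (1 + s) * ((N : ℝ) - k) ^ 2 - (1 + s) * (k : ℝ) * ((N : ℝ) - k) / (2 * N)) /
           ((N : ℝ) * ((k : ℝ) + (1 + s) * ((N : ℝ) - k)))] := by
    ext i j
    fin_cases i <;> fin_cases j <;>
      · simp [B0, pZ, Matrix.add_apply, Matrix.smul_apply]
        field_simp
        ring
  rw [hQ] at hMdef
  have hdet : M.det = (k : ℝ) ^ 2 * ((N : ℝ) - k) ^ 2 * (2 + s) ^ 2 * (2 * N + 1) /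
      (2 * (N : ℝ) ^ 3 * ((k : ℝ) + (1 + s) * ((N : ℝ) - k)) ^ 2) := by
    rw [hMdef, Matrix.det_fin_two]
    simp [Matrix.sub_apply, Matrix.one_apply]
    field_simp
    ring
  have hdetpos : 0 < M.det := by
    rw [hdet]
    have h1 : (0:ℝ) < (k : ℝ) ^ 2 * ((N : ℝ) - k) ^ 2 * (2 + s) ^ 2 * (2 * N + 1) :=
      by positivity
    have h2 : (0:ℝ) < 2 * (N : ℝ) ^ 3 * ((k : ℝ) + (1 + s) * ((N : ℝ) - k)) ^ 2 := by positivity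
    exact div_pos h1 h2
  have hdu : IsUnit M.det := isUnit_iff_ne_zero.mpr (ne_of_gt hdetpos)
  refine ⟨(Matrix.isUnit_iff_isUnit_det _).mpr hdu, ?_⟩
  have hmul : Btp N s k * M = pZ N s k • Bp N k := by
    rw [hMdef]
    ext i j
    fin_cases i <;> fin_cases j <;>
      · simp [Btp, Bp, pZ, Matrix.mul_apply, Fin.sum_univ_two, Matrix.sub_apply,
          Matrix.one_apply, Matrix.smul_apply]
        field_simp
        ring
  calc pZ N s k • (Bp N k * M⁻¹)
      = (pZ N s k • Bp N k) * M⁻¹ := by rw [smul_mul_assoc]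
    _ = (Btp N s k * M) * M⁻¹ := by rw [hmul]
    _ = Btp N s k * (M * M⁻¹) := by rw [Matrix.mul_assoc]
    _ = Btp N s k := by rw [Matrix.mul_nonsing_inv _ hdu, mul_one]

end
end

section
/- For each integer k with 1 ≤ k ≤ N−1, the matrix I − (1−p_k)B̄_k^{(0)} is invertible and p_k · B̄_k^− · (I − (1−p_k)B̄_k^{(0)})^{−1} equals the 2×2 matrix B̃_k^− with rows (1 − 1/((2N+1)(s+2)), 1/((2N+1)(s+2))) and ((k + (N+1)(1+s))/((2N+1)(s+2)(N−k+1)), 1 − (k + (N+1)(1+s))/((2N+1)(s+2)(N−k+1))). -/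
set_option maxHeartbeats 1000000


noncomputable section

/-- `B̄_k^−`. -/
def Bm (N k : ℕ) : Matrix (Fin 2) (Fin 2) ℝ :=
  !![1, 0;
     (k : ℝ) / (2 * N * ((N : ℝ) - k + 1)), 1 - (k : ℝ) / (2 * N * ((N : ℝ) - k + 1))]

/-- `B̃_k^−`. -/
def Btm (N : ℕ) (s : ℝ) (k : ℕ) : Matrix (Fin 2) (Fin 2) ℝ :=
  !![1 - 1 / ((2 * (N : ℝ) + 1) * (s + 2)), 1 / ((2 * (N : ℝ) + 1) * (s + 2));
     ((k : ℝ) + ((N : ℝ) + 1) * (1 + s)) / ((2 * (N : ℝ) + 1) * (s + 2) * ((N : ℝ) - k + 1)),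
       1 - ((k : ℝ) + ((N : ℝ) + 1) * (1 + s)) /
        ((2 * (N : ℝ) + 1) * (s + 2) * ((N : ℝ) - k + 1))]

/-- For each integer `1 ≤ k ≤ N−1`, the matrix `I − (1−p_k)B̄_k^{(0)}`
is invertible and `p_k · B̄_k^− · (I − (1−p_k)B̄_k^{(0)})⁻¹ = B̃_k^−`. -/
theorem stmt8 (N : ℕ) (hN : 2 ≤ N) (s : ℝ) (hs : 0 < s)
    (k : ℕ) (hk1 : 1 ≤ k) (hkN : k ≤ N - 1) :
    IsUnit (1 - (1 - pZ N s k) • B0 N s k) ∧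
    pZ N s k • (Bm N k * (1 - (1 - pZ N s k) • B0 N s k)⁻¹) = Btm N s k := by
  have hk1N : k + 1 ≤ N := by omega
  have hx : (0:ℝ) < N := by positivity
  have hc : (0:ℝ) < k := by exact_mod_cast hk1
  have hxc0 : (0:ℝ) < (N:ℝ) - k := by
    have : ((k:ℝ) + 1) ≤ N := by exact_mod_cast hk1N
    linarith
  have hxc1 : (0:ℝ) < (N:ℝ) - k + 1 := by linarith
  have hD : (0:ℝ) < (k:ℝ)^2 + (1+s) * ((N:ℝ) - k)^2 := by positivity
  have hden : (0:ℝ) < (k:ℝ) + (1+s) * ((N:ℝ) - k) := by positivity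
  have hs2 : (0:ℝ) < s + 2 := by linarith
  set E : ℝ := (k:ℝ) * ((N:ℝ) - k) / (2 * (N:ℝ)^2 * ((k:ℝ) + (1+s) * ((N:ℝ) - k)))
    with hEdef
  have hE : 0 < E := by rw [hEdef]; positivity
  have hp : 0 < pZ N s k := by unfold pZ; positivity
  have hAeq : 1 - (1 - pZ N s k) • B0 N s k =
      !![pZ N s k + E, -E; -((1+s) * E), pZ N s k + (1+s) * E] := by
    ext i j
    fin_cases i <;> fin_cases j <;>
      · simp [B0, pZ, hEdef, Matrix.sub_apply, Matrix.one_apply,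
          Matrix.smul_apply, Matrix.add_apply]
        field_simp
        ring
  have hdet : (1 - (1 - pZ N s k) • B0 N s k).det
      = pZ N s k * (pZ N s k + (2+s) * E) := by
    rw [hAeq]; simp [Matrix.det_fin_two]; ring
  have hdetpos : 0 < (1 - (1 - pZ N s k) • B0 N s k).det := by
    rw [hdet]; positivity
  have hunit : IsUnit (1 - (1 - pZ N s k) • B0 N s k).det :=
    isUnit_iff_ne_zero.mpr (ne_of_gt hdetpos)
  refine ⟨(Matrix.isUnit_iff_isUnit_det _).mpr hunit, ?_⟩
  have hmul : Btm N s k * (1 - (1 - pZ N s k) • B0 N s k) = pZ N s k • Bm N k := by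
    rw [hAeq]
    ext i j
    fin_cases i <;> fin_cases j <;>
      · simp [Matrix.mul_apply, Fin.sum_univ_two, Btm, Bm, pZ, hEdef,
          Matrix.smul_apply]
        field_simp
        ring
  calc pZ N s k • (Bm N k * (1 - (1 - pZ N s k) • B0 N s k)⁻¹)
      = (pZ N s k • Bm N k) * (1 - (1 - pZ N s k) • B0 N s k)⁻¹ := by
        rw [smul_mul_assoc]
    _ = Btm N s k * (1 - (1 - pZ N s k) • B0 N s k) *
        (1 - (1 - pZ N s k) • B0 N s k)⁻¹ := by rw [hmul]
    _ = Btm N s k := by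
        rw [Matrix.mul_assoc, Matrix.mul_nonsing_inv _ hunit, Matrix.mul_one]

end
end
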